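/- arXiv:0912.5178 — 2 statements merged into one kernel-verified Lean document; each statement's English description precedes it below -/
import Mathlib

section
/- Assume L is a domain and let ν be an L-valued maxitive measure on the prepaving ℰ. Then the map ν* : ℰ* → L defined by ν*(A) = ⋀_{G ∈ ℰ, G ⊇ A} ν(G) is a maxitive measure on ℰ* that extends ν (i.e. ν*(G) = ν(G) for G ∈ ℰ), and it is the greatest maxitive measure on ℰ* extending ν: any maxitive measure τ on ℰ* with τ(G) = ν(G) for all G ∈ ℰ satisfies τ(A) ≤ ν*(A) for all A ∈ ℰ*. -/
open Set

variable {E L : Type*}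

/-- A prepaving on `E`: a collection of subsets containing `∅` and closed under
(binary, hence finite) unions. -/
def IsPrepaving (ℰ : Set (Set E)) : Prop :=
  ∅ ∈ ℰ ∧ ∀ A ∈ ℰ, ∀ B ∈ ℰ, A ∪ B ∈ ℰ

/-- A paving on `E`: a prepaving covering `E` such that, for every `x`, the
collection `{G ∈ ℰ : x ∈ G}` is nonempty and filtered under inclusion. -/
def IsPaving (ℰ : Set (Set E)) : Prop :=
  IsPrepaving ℰ ∧ ∀ x : E, (∃ G ∈ ℰ, x ∈ G) ∧
    ∀ G ∈ ℰ, x ∈ G → ∀ G' ∈ ℰ, x ∈ G' → ∃ H ∈ ℰ, x ∈ H ∧ H ⊆ G ∧ H ⊆ G'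

/-- An ideal of the prepaving `ℰ`: a nonempty subset of `ℰ` closed under finite
unions and downward closed (within `ℰ`). -/
def IsIdealOf (ℰ 𝓘 : Set (Set E)) : Prop :=
  𝓘.Nonempty ∧ 𝓘 ⊆ ℰ ∧ (∀ A ∈ 𝓘, ∀ B ∈ 𝓘, A ∪ B ∈ 𝓘) ∧
    ∀ A ∈ ℰ, ∀ B ∈ 𝓘, A ⊆ B → A ∈ 𝓘

/-- A filter of a poset: a nonempty, (downward) filtered, upward-closed subset. -/
def IsFilterSet [PartialOrder L] (F : Set L) : Prop :=
  F.Nonempty ∧ (∀ x ∈ F, ∀ y ∈ F, ∃ z ∈ F, z ≤ x ∧ z ≤ y) ∧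
    ∀ x ∈ F, ∀ y : L, x ≤ y → y ∈ F

/-- `y` is way-above `x`: for every filter `F` possessing an infimum `a`,
`a ≤ x` implies `y ∈ F`. -/
def WayAbove [PartialOrder L] (y x : L) : Prop :=
  ∀ F : Set L, IsFilterSet F → ∀ a : L, IsGLB F a → a ≤ x → y ∈ F

/-- A continuous poset: for every `x`, `↟x = {y : y ≫ x}` is a filter with
infimum `x`. -/
def ContinuousPoset (L : Type*) [PartialOrder L] : Prop :=
  ∀ x : L, IsFilterSet {y : L | WayAbove y x} ∧ IsGLB {y : L | WayAbove y x} x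

/-- A domain: a continuous poset in which every filter has an infimum. -/
def DomainPoset (L : Type*) [PartialOrder L] : Prop :=
  ContinuousPoset L ∧ ∀ F : Set L, IsFilterSet F → ∃ a : L, IsGLB F a

/-- A locally complete poset: every upper-bounded subset has a supremum. -/
def LocallyComplete (L : Type*) [PartialOrder L] : Prop :=
  ∀ S : Set L, BddAbove S → ∃ a : L, IsLUB S a

/-- A maxitive measure on `ℰ`: `ν ∅ = 0`, and for every finite family of
elements of `ℰ` whose union lies in `ℰ`, the supremum of the values exists and
equals the value of the union. -/
def IsMaxitive [PartialOrder L] [OrderBot L] (ℰ : Set (Set E)) (ν : Set E → L) : Prop :=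
  ν ∅ = ⊥ ∧ ∀ S : Finset (Set E), (∀ G ∈ S, G ∈ ℰ) → ⋃₀ (S : Set (Set E)) ∈ ℰ →
    IsLUB (ν '' (S : Set (Set E))) (ν (⋃₀ (S : Set (Set E))))

/-- A completely maxitive measure on `ℰ`: as above, but for arbitrary families. -/
def IsCompletelyMaxitive [PartialOrder L] [OrderBot L] (ℰ : Set (Set E)) (ν : Set E → L) : Prop :=
  ν ∅ = ⊥ ∧ ∀ 𝒢 : Set (Set E), 𝒢 ⊆ ℰ → ⋃₀ 𝒢 ∈ ℰ →
    IsLUB (ν '' 𝒢) (ν (⋃₀ 𝒢))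

open Classical in
/-- The infimum of `S` when it exists, `⊥` otherwise. -/
noncomputable def pInf [PartialOrder L] [OrderBot L] (S : Set L) : L :=
  if h : ∃ a : L, IsGLB S a then h.choose else ⊥

open Classical in
/-- The supremum of `S` when it exists, `⊥` otherwise. -/
noncomputable def pSup [PartialOrder L] [OrderBot L] (S : Set L) : L :=
  if h : ∃ a : L, IsLUB S a then h.choose else ⊥

/-- `ℰ*`: the collection of subsets `A` of `E` such that `{G ∈ ℰ : A ⊆ G}` is
nonempty and filtered under inclusion. -/
def EStar (ℰ : Set (Set E)) : Set (Set E) :=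
  {A | (∃ G ∈ ℰ, A ⊆ G) ∧
    ∀ G ∈ ℰ, A ⊆ G → ∀ G' ∈ ℰ, A ⊆ G' → ∃ H ∈ ℰ, A ⊆ H ∧ H ⊆ G ∧ H ⊆ G'}

/-- The extension `ν*` of `ν`: `ν*(A) = ⋀ {ν G : G ∈ ℰ, A ⊆ G}`. -/
noncomputable def nuStar [PartialOrder L] [OrderBot L] (ℰ : Set (Set E))
    (ν : Set E → L) (A : Set E) : L :=
  pInf (ν '' {G ∈ ℰ | A ⊆ G})

/-- `𝒦`: the compact subsets of `E` for the topology generated by `ℰ`. -/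
def Kpt (ℰ : Set (Set E)) : Set (Set E) :=
  {K | @IsCompact E (TopologicalSpace.generateFrom ℰ) K}

/-- `ℱ = {F ⊆ E : F ∈ ℰ* and Fᶜ ∈ ℰ}`. -/
def Fcl (ℰ : Set (Set E)) : Set (Set E) :=
  {F | F ∈ EStar ℰ ∧ Fᶜ ∈ ℰ}

/-- `ℋ = 𝒦 ∩ ℱ`. -/
def Hcf (ℰ : Set (Set E)) : Set (Set E) := Kpt ℰ ∩ Fcl ℰ

/-- The regular part `⌊ν⌋(G) = ⊕ {ν*(K) : K ∈ 𝒦, K ⊆ G}`. -/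
noncomputable def regPart [PartialOrder L] [OrderBot L] (ℰ : Set (Set E))
    (ν : Set E → L) (G : Set E) : L :=
  pSup (nuStar ℰ ν '' {K ∈ Kpt ℰ | K ⊆ G})

/-- `r` is the residual part of `ν`: the smallest maxitive measure such that
`ν = ⌊ν⌋ ⊕ r` on `ℰ`. -/
def IsResidualPart [Lattice L] [OrderBot L] (ℰ : Set (Set E)) (ν r : Set E → L) : Prop :=
  IsMaxitive ℰ r ∧ (∀ G ∈ ℰ, ν G = regPart ℰ ν G ⊔ r G) ∧
    ∀ τ : Set E → L, IsMaxitive ℰ τ → (∀ G ∈ ℰ, ν G = regPart ℰ ν G ⊔ τ G) →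
      ∀ G ∈ ℰ, r G ≤ τ G
private lemma myFinsetUnion {ℰ : Set (Set E)} (hpre : IsPrepaving ℰ) :
    ∀ T : Finset (Set E), (∀ G ∈ T, G ∈ ℰ) → ⋃₀ (T : Set (Set E)) ∈ ℰ := by
  classical
  intro T
  induction T using Finset.induction_on with
  | empty => intro _; simpa using hpre.1
  | @insert a s ha ih =>
    intro h
    rw [Finset.coe_insert, Set.sUnion_insert]
    exact hpre.2 a (h a (Finset.mem_insert_self a s)) _
      (ih fun G hG => h G (Finset.mem_insert_of_mem hG))

private lemma myMono [PartialOrder L] [OrderBot L] {ℰ : Set (Set E)} {ν : Set E → L}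
    (hν : IsMaxitive ℰ ν) {A B : Set E} (hA : A ∈ ℰ) (hB : B ∈ ℰ) (hAB : A ⊆ B) :
    ν A ≤ ν B := by
  classical
  have hU : ⋃₀ (({A, B} : Finset (Set E)) : Set (Set E)) = B := by
    simp only [Finset.coe_insert, Finset.coe_singleton, Set.sUnion_insert, Set.sUnion_singleton]
    exact Set.union_eq_right.mpr hAB
  have h := hν.2 {A, B} (by
      intro G hG
      rcases Finset.mem_insert.mp hG with rfl | hG
      · exact hA
      · rcases Finset.mem_singleton.mp hG with rfl; exact hB)
    (by rw [hU]; exact hB)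
  rw [hU] at h
  exact h.1 ⟨A, by simp, rfl⟩

private lemma isGLB_pInf' [PartialOrder L] [OrderBot L] {S : Set L}
    (h : ∃ a : L, IsGLB S a) : IsGLB S (pInf S) := by
  rw [pInf, dif_pos h]
  exact h.choose_spec

private lemma wayAbove_of_le [PartialOrder L] {y b x : L} (h : WayAbove y b) (hx : x ≤ b) :
    WayAbove y x := fun F hF a ha hax => h F hF a ha (hax.trans hx)

private lemma myFilterGLB [PartialOrder L] [OrderBot L] (hL : DomainPoset L)
    {ℰ : Set (Set E)} {ν : Set E → L} (hν : IsMaxitive ℰ ν)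
    {A : Set E} (hA : A ∈ EStar ℰ) :
    IsFilterSet {y : L | ∃ G ∈ ℰ, A ⊆ G ∧ ν G ≤ y} ∧
      IsGLB (ν '' {G ∈ ℰ | A ⊆ G}) (nuStar ℰ ν A) ∧
      IsGLB {y : L | ∃ G ∈ ℰ, A ⊆ G ∧ ν G ≤ y} (nuStar ℰ ν A) := by
  obtain ⟨⟨G₀, hG₀, hAG₀⟩, hfilt⟩ := hA
  set F : Set L := {y : L | ∃ G ∈ ℰ, A ⊆ G ∧ ν G ≤ y} with hF
  have hFilter : IsFilterSet F := by
    refine ⟨⟨ν G₀, G₀, hG₀, hAG₀, le_rfl⟩, ?_, ?_⟩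
    · rintro x ⟨G₁, h₁, hA₁, hx⟩ y ⟨G₂, h₂, hA₂, hy⟩
      obtain ⟨H, hH, hAH, hH₁, hH₂⟩ := hfilt G₁ h₁ hA₁ G₂ h₂ hA₂
      exact ⟨ν H, ⟨H, hH, hAH, le_rfl⟩, (myMono hν hH h₁ hH₁).trans hx,
        (myMono hν hH h₂ hH₂).trans hy⟩
    · rintro x ⟨G₁, h₁, hA₁, hx⟩ y hxy
      exact ⟨G₁, h₁, hA₁, hx.trans hxy⟩
  obtain ⟨a, ha⟩ := hL.2 F hFilter
  have hlb : lowerBounds F = lowerBounds (ν '' {G ∈ ℰ | A ⊆ G}) := by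
    apply Set.Subset.antisymm
    · rintro b hb x ⟨G, ⟨hG, hAG⟩, rfl⟩
      exact hb ⟨G, hG, hAG, le_rfl⟩
    · rintro b hb y ⟨G, hG, hAG, hGy⟩
      exact (hb ⟨G, ⟨hG, hAG⟩, rfl⟩).trans hGy
  have haD : IsGLB (ν '' {G ∈ ℰ | A ⊆ G}) a := ⟨hlb ▸ ha.1, hlb ▸ ha.2⟩
  have hnu : nuStar ℰ ν A = a := (isGLB_pInf' ⟨a, haD⟩).unique haD
  refine ⟨hFilter, ?_, ?_⟩
  · rw [hnu]; exact haD
  · rw [hnu]; exact ha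

/-- over a domain, `ν*` (the infimum of `ν` over supersets in `ℰ`)
is the greatest maxitive measure on `ℰ*` extending `ν`. -/
theorem nuStar_greatest_maxitive_extension [PartialOrder L] [OrderBot L]
    (hL : DomainPoset L)
    (ℰ : Set (Set E)) (hpre : IsPrepaving ℰ)
    (ν : Set E → L) (hν : IsMaxitive ℰ ν) :
    (∀ A ∈ EStar ℰ, IsGLB (ν '' {G ∈ ℰ | A ⊆ G}) (nuStar ℰ ν A)) ∧
    (∀ G ∈ ℰ, nuStar ℰ ν G = ν G) ∧
    IsMaxitive (EStar ℰ) (nuStar ℰ ν) ∧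
    ∀ τ : Set E → L, IsMaxitive (EStar ℰ) τ → (∀ G ∈ ℰ, τ G = ν G) →
      ∀ A ∈ EStar ℰ, τ A ≤ nuStar ℰ ν A := by
  have part1 : ∀ A ∈ EStar ℰ, IsGLB (ν '' {G ∈ ℰ | A ⊆ G}) (nuStar ℰ ν A) :=
    fun A hA => (myFilterGLB hL hν hA).2.1
  have hsub : ℰ ⊆ EStar ℰ := fun G hG =>
    ⟨⟨G, hG, subset_rfl⟩, fun G₁ _ hs₁ G₂ _ hs₂ => ⟨G, hG, subset_rfl, hs₁, hs₂⟩⟩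
  have part2 : ∀ G ∈ ℰ, nuStar ℰ ν G = ν G := by
    intro G hG
    have hglb : IsGLB (ν '' {H ∈ ℰ | G ⊆ H}) (ν G) := by
      constructor
      · rintro x ⟨H, ⟨hH, hGH⟩, rfl⟩
        exact myMono hν hG hH hGH
      · intro b hb
        exact hb ⟨G, ⟨hG, subset_rfl⟩, rfl⟩
    exact (part1 G (hsub hG)).unique hglb
  have part3 : IsMaxitive (EStar ℰ) (nuStar ℰ ν) := by
    refine ⟨by rw [part2 ∅ hpre.1]; exact hν.1, ?_⟩
    intro S hS hU
    set A := ⋃₀ (S : Set (Set E)) with hAdef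
    have hglbA := part1 A hU
    constructor
    · rintro x ⟨Aj, hAj, rfl⟩
      refine hglbA.2 ?_
      rintro z ⟨G, ⟨hG, hAG⟩, rfl⟩
      exact (part1 Aj (hS Aj (Finset.mem_coe.mp hAj))).1
        ⟨G, ⟨hG, (Set.subset_sUnion_of_mem hAj).trans hAG⟩, rfl⟩
    · intro b hb
      have key : ∀ y : L, WayAbove y b → nuStar ℰ ν A ≤ y := by
        intro y hy
        have hchoice : ∀ Aj ∈ S, ∃ G, G ∈ ℰ ∧ Aj ⊆ G ∧ ν G ≤ y := by
          intro Aj hAj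
          have hAjE := hS Aj hAj
          obtain ⟨hFil, hglbD, hglbF⟩ := myFilterGLB hL hν hAjE
          have hle : nuStar ℰ ν Aj ≤ b := hb ⟨Aj, Finset.mem_coe.mpr hAj, rfl⟩
          obtain ⟨G, hG, hAG, hGy⟩ := (wayAbove_of_le hy hle) _ hFil _ hglbF le_rfl
          exact ⟨G, hG, hAG, hGy⟩
        classical
        choose f hf1 hf2 hf3 using hchoice
        set T : Finset (Set E) := S.attach.image (fun x => f x.1 x.2) with hT
        have hTE : ∀ G ∈ T, G ∈ ℰ := by
          intro G hG
          rw [hT] at hG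
          obtain ⟨x, _, rfl⟩ := Finset.mem_image.mp hG
          exact hf1 x.1 x.2
        have hUT : ⋃₀ (T : Set (Set E)) ∈ ℰ := myFinsetUnion hpre T hTE
        have hAsub : A ⊆ ⋃₀ (T : Set (Set E)) := by
          rintro x ⟨Aj, hAj, hx⟩
          have hAj' : Aj ∈ S := Finset.mem_coe.mp hAj
          refine ⟨f Aj hAj', Finset.mem_coe.mpr ?_, hf2 Aj hAj' hx⟩
          rw [hT]
          exact Finset.mem_image.mpr ⟨⟨Aj, hAj'⟩, Finset.mem_attach _ _, rfl⟩
        have hνT : ν (⋃₀ (T : Set (Set E))) ≤ y := by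
          apply (hν.2 T hTE hUT).2
          rintro z ⟨G, hG, rfl⟩
          have hG' : G ∈ T := Finset.mem_coe.mp hG
          rw [hT] at hG'
          obtain ⟨x, _, rfl⟩ := Finset.mem_image.mp hG'
          exact hf3 x.1 x.2
        exact (hglbA.1 ⟨_, ⟨hUT, hAsub⟩, rfl⟩).trans hνT
      exact (hL.1 b).2.2 (fun y hy => key y hy)
  refine ⟨part1, part2, part3, ?_⟩
  intro τ hτ hτν A hA
  refine (part1 A hA).2 ?_
  rintro x ⟨G, ⟨hG, hAG⟩, rfl⟩
  have h := myMono hτ hA (hsub hG) hAG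
  rwa [hτν G hG] at h
end

section
/- Assume L is a locally continuous frame, ℰ is a paving on E, and ν is an L-valued maxitive measure on ℰ. Then the following are equivalent: (1) ν has a cardinal density (there exists c : E → L with ν(G) = ⊕_{x ∈ G} c(x) for all G ∈ ℰ); (2) ν = ⌊ν⌋; (3) ⊥ν = 0. -/
open Set

variable {E L : Type*}

set_option linter.unusedSectionVars false

section MyAux
variable [PartialOrder L] [OrderBot L]

lemma myAux_exists_glb (hlc : LocallyComplete L) {S : Set L} (hS : S.Nonempty) :
    ∃ a : L, IsGLB S a := by
  obtain ⟨s, hs⟩ := hS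
  obtain ⟨a, ha⟩ := hlc (lowerBounds S) ⟨s, fun l hl => hl hs⟩
  exact ⟨a, ⟨fun t ht => ha.2 fun l hl => hl ht, fun l hl => ha.1 hl⟩⟩

lemma myAux_pInf_isGLB {S : Set L} (h : ∃ a : L, IsGLB S a) : IsGLB S (pInf S) := by
  rw [pInf, dif_pos h]; exact h.choose_spec

lemma myAux_pSup_isLUB {S : Set L} (h : ∃ a : L, IsLUB S a) : IsLUB S (pSup S) := by
  rw [pSup, dif_pos h]; exact h.choose_spec

lemma myAux_sUnion_finset {ℰ : Set (Set E)} (hE : IsPrepaving ℰ) (S : Finset (Set E))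
    (hS : ∀ G ∈ S, G ∈ ℰ) : ⋃₀ (S : Set (Set E)) ∈ ℰ := by
  classical
  induction S using Finset.induction with
  | empty => simpa using hE.1
  | @insert A s hA ih =>
    rw [Finset.coe_insert, sUnion_insert]
    exact hE.2 A (hS A (Finset.mem_insert_self A s)) _
      (ih fun G hG => hS G (Finset.mem_insert_of_mem hG))

lemma myAux_mono {ℰ : Set (Set E)} (hE : IsPrepaving ℰ) {ν : Set E → L}
    (hν : IsMaxitive ℰ ν) {A B : Set E} (hA : A ∈ ℰ) (hB : B ∈ ℰ) (hAB : A ⊆ B) :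
    ν A ≤ ν B := by
  classical
  have hu : ⋃₀ (({A, B} : Finset (Set E)) : Set (Set E)) = B := by
    simp [Set.union_eq_self_of_subset_left hAB]
  have h := hν.2 {A, B} (by
    intro G hG
    simp only [Finset.mem_insert, Finset.mem_singleton] at hG
    rcases hG with rfl | rfl <;> assumption) (by rw [hu]; exact hB)
  rw [hu] at h
  exact h.1 ⟨A, by simp, rfl⟩

lemma myAux_nuStar_isGLB (hlc : LocallyComplete L) {ℰ : Set (Set E)} (ν : Set E → L)
    {A G : Set E} (hG : G ∈ ℰ) (hAG : A ⊆ G) :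
    IsGLB (ν '' {G' ∈ ℰ | A ⊆ G'}) (nuStar ℰ ν A) :=
  myAux_pInf_isGLB (myAux_exists_glb hlc ⟨ν G, ⟨G, ⟨hG, hAG⟩, rfl⟩⟩)

lemma myAux_nuStar_le (hlc : LocallyComplete L) {ℰ : Set (Set E)} (ν : Set E → L)
    {A G : Set E} (hG : G ∈ ℰ) (hAG : A ⊆ G) : nuStar ℰ ν A ≤ ν G :=
  (myAux_nuStar_isGLB hlc ν hG hAG).1 ⟨G, ⟨hG, hAG⟩, rfl⟩

lemma myAux_regPart_isLUB (hlc : LocallyComplete L) {ℰ : Set (Set E)}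
    (hE : IsPrepaving ℰ) (ν : Set E → L) {G : Set E} (hG : G ∈ ℰ) :
    IsLUB (nuStar ℰ ν '' {K ∈ Kpt ℰ | K ⊆ G}) (regPart ℰ ν G) := by
  apply myAux_pSup_isLUB
  apply hlc
  refine ⟨ν G, ?_⟩
  rintro y ⟨K, ⟨hKc, hKG⟩, rfl⟩
  exact myAux_nuStar_le hlc ν hG hKG

lemma myAux_regPart_le (hlc : LocallyComplete L) {ℰ : Set (Set E)}
    (hE : IsPrepaving ℰ) (ν : Set E → L) {G : Set E} (hG : G ∈ ℰ) :
    regPart ℰ ν G ≤ ν G := by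
  apply (myAux_regPart_isLUB hlc hE ν hG).2
  rintro y ⟨K, ⟨hKc, hKG⟩, rfl⟩
  exact myAux_nuStar_le hlc ν hG hKG

/-- The set `{y | ∃ G' ∈ ℰ, x ∈ G' ∧ ν G' ≤ y}` is a filter with infimum `ν*({x})`. -/
lemma myAux_singleton_filter (hlc : LocallyComplete L) {ℰ : Set (Set E)}
    (hpav : IsPaving ℰ) {ν : Set E → L} (hν : IsMaxitive ℰ ν) (x : E) :
    IsFilterSet {y : L | ∃ G' ∈ ℰ, x ∈ G' ∧ ν G' ≤ y} ∧
      IsGLB {y : L | ∃ G' ∈ ℰ, x ∈ G' ∧ ν G' ≤ y} (nuStar ℰ ν {x}) := by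
  obtain ⟨G0, hG0, hx0⟩ := (hpav.2 x).1
  have hglb : IsGLB (ν '' {G' ∈ ℰ | ({x} : Set E) ⊆ G'}) (nuStar ℰ ν {x}) :=
    myAux_nuStar_isGLB hlc ν hG0 (singleton_subset_iff.mpr hx0)
  refine ⟨⟨⟨ν G0, G0, hG0, hx0, le_rfl⟩, ?_, ?_⟩, ?_, ?_⟩
  · rintro y1 ⟨G1, h1, hx1, hle1⟩ y2 ⟨G2, h2, hx2, hle2⟩
    obtain ⟨H, hH, hxH, hH1, hH2⟩ := (hpav.2 x).2 G1 h1 hx1 G2 h2 hx2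
    exact ⟨ν H, ⟨H, hH, hxH, le_rfl⟩,
      le_trans (myAux_mono hpav.1 hν hH h1 hH1) hle1,
      le_trans (myAux_mono hpav.1 hν hH h2 hH2) hle2⟩
  · rintro y ⟨G', h', hx', hle⟩ z hyz
    exact ⟨G', h', hx', le_trans hle hyz⟩
  · rintro y ⟨G', h', hx', hle⟩
    exact le_trans (hglb.1 ⟨G', ⟨h', singleton_subset_iff.mpr hx'⟩, rfl⟩) hle
  · intro l hl
    apply hglb.2
    rintro y ⟨G', ⟨h', hsub⟩, rfl⟩
    exact hl ⟨G', h', singleton_subset_iff.mp hsub, le_rfl⟩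

/-- Key lemma: if `b` dominates `ν*({x})` for all `x` in a compact `K ⊆ G`, then
`ν*(K) ≤ b`. -/
lemma myAux_key (hc : ContinuousPoset L) (hlc : LocallyComplete L)
    {ℰ : Set (Set E)} (hpav : IsPaving ℰ) {ν : Set E → L} (hν : IsMaxitive ℰ ν)
    {K G : Set E} (hK : K ∈ Kpt ℰ) (hG : G ∈ ℰ) (hKG : K ⊆ G) {b : L}
    (hb : ∀ x ∈ K, nuStar ℰ ν {x} ≤ b) : nuStar ℰ ν K ≤ b := by
  letI : TopologicalSpace E := TopologicalSpace.generateFrom ℰ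
  apply (hc b).2.2
  intro u hu
  -- `hu : WayAbove u b`; find for each `x ∈ K` a set `Gf x ∈ ℰ` with `ν (Gf x) ≤ u`
  have hmem : ∀ x : K, ∃ G' ∈ ℰ, (x : E) ∈ G' ∧ ν G' ≤ u := by
    intro x
    obtain ⟨hF, hFglb⟩ := myAux_singleton_filter hlc hpav hν (x : E)
    exact hu _ hF _ hFglb (hb x x.2)
  choose Gf hGfE hGfmem hGfle using hmem
  have hK' : IsCompact K := hK
  obtain ⟨t, ht⟩ := hK'.elim_finite_subcover Gf
    (fun i => TopologicalSpace.GenerateOpen.basic _ (hGfE i))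
    (fun x hx => mem_iUnion.mpr ⟨⟨x, hx⟩, hGfmem ⟨x, hx⟩⟩)
  classical
  set S : Finset (Set E) := t.image Gf with hS
  have hSE : ∀ H ∈ S, H ∈ ℰ := by
    intro H hH
    obtain ⟨i, _, rfl⟩ := Finset.mem_image.mp hH
    exact hGfE i
  have hSU : ⋃₀ (S : Set (Set E)) ∈ ℰ := myAux_sUnion_finset hpav.1 S hSE
  have hKS : K ⊆ ⋃₀ (S : Set (Set E)) := by
    rw [hS, Finset.coe_image, sUnion_image]
    exact ht
  have h1 : nuStar ℰ ν K ≤ ν (⋃₀ (S : Set (Set E))) := myAux_nuStar_le hlc ν hSU hKS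
  have h2 : ν (⋃₀ (S : Set (Set E))) ≤ u := by
    apply (hν.2 S hSE hSU).2
    rintro y ⟨H, hH, rfl⟩
    obtain ⟨i, _, rfl⟩ := Finset.mem_image.mp hH
    exact hGfle i
  exact le_trans h1 h2

end MyAux
/-- `ν` has a cardinal density iff `ν = ⌊ν⌋` iff `⊥ν = 0`. -/
theorem density_iff_regPart_iff_residual_bot [DistribLattice L] [OrderBot L]
    (hc : ContinuousPoset L) (hlc : LocallyComplete L)
    (ℰ : Set (Set E)) (hpav : IsPaving ℰ)
    (ν : Set E → L) (hν : IsMaxitive ℰ ν)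
    (r : Set E → L) (hr : IsResidualPart ℰ ν r) :
    ((∃ c : E → L, ∀ G ∈ ℰ, IsLUB (c '' G) (ν G)) ↔
      ∀ G ∈ ℰ, ν G = regPart ℰ ν G) ∧
    ((∀ G ∈ ℰ, ν G = regPart ℰ ν G) ↔ ∀ G ∈ ℰ, r G = ⊥) := by
  letI : TopologicalSpace E := TopologicalSpace.generateFrom ℰ
  constructor
  · constructor
    · -- density → regular
      rintro ⟨c, hcd⟩ G hG
      have hreg := myAux_regPart_isLUB hlc hpav.1 ν hG
      refine le_antisymm ?_ (myAux_regPart_le hlc hpav.1 ν hG)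
      apply (hcd G hG).2
      rintro y ⟨x, hx, rfl⟩
      have h1 : c x ≤ nuStar ℰ ν {x} := by
        apply (myAux_nuStar_isGLB hlc ν hG (singleton_subset_iff.mpr hx)).2
        rintro y ⟨G', ⟨hG', hsub⟩, rfl⟩
        exact (hcd G' hG').1 ⟨x, singleton_subset_iff.mp hsub, rfl⟩
      refine le_trans h1 (hreg.1 ⟨{x}, ⟨?_, singleton_subset_iff.mpr hx⟩, rfl⟩)
      exact isCompact_singleton
    · -- regular → density
      intro hregeq
      refine ⟨fun x => nuStar ℰ ν {x}, fun G hG => ⟨?_, ?_⟩⟩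
      · rintro y ⟨x, hx, rfl⟩
        exact (hregeq G hG) ▸ myAux_nuStar_le hlc ν hG (singleton_subset_iff.mpr hx)
      · intro b hb
        rw [hregeq G hG]
        apply (myAux_regPart_isLUB hlc hpav.1 ν hG).2
        rintro y ⟨K, ⟨hKc, hKG⟩, rfl⟩
        exact myAux_key hc hlc hpav hν hKc hG hKG
          fun x hx => hb ⟨x, hKG hx, rfl⟩
  · constructor
    · intro h G hG
      have hbot : IsMaxitive ℰ (fun _ : Set E => (⊥ : L)) := by
        refine ⟨rfl, fun S hS hU => ⟨?_, fun b _ => bot_le⟩⟩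
        rintro y ⟨_, _, rfl⟩
        exact le_rfl
      have := hr.2.2 (fun _ => ⊥) hbot
        (fun G' hG' => by simp [← h G' hG']) G hG
      exact le_bot_iff.mp this
    · intro h G hG
      have h2 := hr.2.1 G hG
      rw [h G hG, sup_bot_eq] at h2
      exact h2
end
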